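/- For a two-qubit density operator ρ with decreasingly ordered eigenvalues p₁ ≥ p₂ ≥ p₃ ≥ p₄, define H(ρ) = √((p₁−p₃)² + (p₂−p₄)²) − p₂ − p₄ and G(ρ) = max{0, H(ρ)}/2. Then G(ρ) ≤ 1/2, with equality if and only if ρ is pure. -/
import Mathlib


/-- Maximal negativity over two-qubit states with spectrum `p₁ ≥ p₂ ≥ p₃ ≥ p₄`:
`G = max{0, √((p₁−p₃)² + (p₂−p₄)²) − p₂ − p₄}/2 ≤ 1/2`, with equality
iff the spectrum is pure. -/
theorem maxNegativity_le_half (p : Fin 4 → ℝ)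
    (hnonneg : ∀ i, 0 ≤ p i) (hsum : ∑ i, p i = 1)
    (hord : ∀ i j : Fin 4, i ≤ j → p j ≤ p i)
    (H G : ℝ)
    (hH : H = Real.sqrt ((p 0 - p 2) ^ 2 + (p 1 - p 3) ^ 2) - p 1 - p 3)
    (hG : G = max 0 H / 2) :
    G ≤ 1 / 2 ∧ (G = 1 / 2 ↔ (p 0 = 1 ∧ p 1 = 0 ∧ p 2 = 0 ∧ p 3 = 0)) := by
  have hsum' : p 0 + p 1 + p 2 + p 3 = 1 := by
    have := hsum
    simp [Fin.sum_univ_four] at this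
    linarith
  have h02 : p 2 ≤ p 0 := hord 0 2 (by decide)
  have h13 : p 3 ≤ p 1 := hord 1 3 (by decide)
  have h12 : p 2 ≤ p 1 := hord 1 2 (by decide)
  have hn1 := hnonneg 1
  have hn2 := hnonneg 2
  have hn3 := hnonneg 3
  have ha : 0 ≤ p 0 - p 2 := by linarith
  have hb : 0 ≤ p 1 - p 3 := by linarith
  have hsq : Real.sqrt ((p 0 - p 2) ^ 2 + (p 1 - p 3) ^ 2)
      ≤ (p 0 - p 2) + (p 1 - p 3) := by
    have h1 : (p 0 - p 2) ^ 2 + (p 1 - p 3) ^ 2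
        ≤ ((p 0 - p 2) + (p 1 - p 3)) ^ 2 := by nlinarith
    calc Real.sqrt ((p 0 - p 2) ^ 2 + (p 1 - p 3) ^ 2)
        ≤ Real.sqrt (((p 0 - p 2) + (p 1 - p 3)) ^ 2) := Real.sqrt_le_sqrt h1
      _ = (p 0 - p 2) + (p 1 - p 3) := Real.sqrt_sq (by linarith)
  have hH1 : H ≤ 1 := by
    rw [hH]
    linarith
  have hGle : G ≤ 1 / 2 := by
    rw [hG]
    have : max 0 H ≤ 1 := max_le (by norm_num) hH1
    linarith
  refine ⟨hGle, ?_, ?_⟩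
  · intro hG12
    have hmax : max 0 H = 1 := by rw [hG] at hG12; linarith
    have hHeq : H = 1 := by
      rcases le_or_gt H 0 with h | h
      · simp [max_eq_left h] at hmax
      · rw [max_eq_right h.le] at hmax; exact hmax
    rw [hH] at hHeq
    -- sqrt ≤ a + b, so 1 ≤ 1 - p1 - 2p2 - 3p3
    have : (1 : ℝ) ≤ 1 - p 1 - 2 * p 2 - 3 * p 3 := by linarith
    have h1 : p 1 = 0 := by linarith
    have h2 : p 2 = 0 := by linarith
    have h3 : p 3 = 0 := by linarith
    exact ⟨by linarith, h1, h2, h3⟩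
  · rintro ⟨h0, h1, h2, h3⟩
    rw [hG, hH, h0, h1, h2, h3]
    norm_num
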